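/- arXiv:0801.1158 — 5 statements merged into one kernel-verified Lean document; each statement's English description precedes it below -/
import Mathlib

section
/- In the randomization scheme, at least two indices i ∈ I satisfy 0 < p_i < 1; in particular, p_i < 1 for the index corresponding to the smallest absolute value coordinate of β̃. -/
open Finset

/-- At least two indices `i ∈ I` satisfy `0 < p_i < 1`; in particular `p_i < 1`
for an index corresponding to the smallest absolute value coordinate of `β̃`. -/
theorem stmt_2 {p : ℕ} (β : Fin p → ℝ)
    (I : Finset (Fin p)) (hI : I = Finset.univ.filter (fun i => β i ≠ 0))
    (hK : 2 ≤ I.card) (c : ℝ) (hc : 1 ≤ c)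
    (pr : Fin p → ℝ)
    (hpr : ∀ i ∈ I, pr i = min 1 (c * ((I.card : ℝ) - 1) * |β i| / ∑ j, |β j|))
    (hsum : ∑ i ∈ I, pr i = (I.card : ℝ) - 1) :
    (∃ i ∈ I, ∃ j ∈ I, i ≠ j ∧ (0 < pr i ∧ pr i < 1) ∧ (0 < pr j ∧ pr j < 1)) ∧
    (∀ i ∈ I, (∀ j ∈ I, |β i| ≤ |β j|) → pr i < 1) := by
  set S := ∑ j, |β j| with hSdef
  have hKR : (2:ℝ) ≤ (I.card : ℝ) := by exact_mod_cast hK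
  have hKpos : (0:ℝ) < (I.card : ℝ) - 1 := by linarith
  have hInonempty : I.Nonempty := Finset.card_pos.mp (by omega)
  obtain ⟨i0, hi0⟩ := hInonempty
  have hβi0 : β i0 ≠ 0 := by rw [hI] at hi0; exact (Finset.mem_filter.mp hi0).2
  have hS : 0 < S := by
    apply Finset.sum_pos' (fun j _ => abs_nonneg _)
    exact ⟨i0, Finset.mem_univ _, abs_pos.mpr hβi0⟩
  have hx : ∀ i ∈ I, 0 < c * ((I.card : ℝ) - 1) * |β i| / S := by
    intro i hi
    have hβi : β i ≠ 0 := by rw [hI] at hi; exact (Finset.mem_filter.mp hi).2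
    exact div_pos (mul_pos (mul_pos (by linarith) hKpos) (abs_pos.mpr hβi)) hS
  have hpos : ∀ i ∈ I, 0 < pr i := fun i hi => by
    rw [hpr i hi]; exact lt_min one_pos (hx i hi)
  have hle : ∀ i ∈ I, pr i ≤ 1 := fun i hi => by
    rw [hpr i hi]; exact min_le_left _ _
  set A := I.filter (fun i => pr i < 1) with hAdef
  have hsplit : ∑ i ∈ A, pr i + ∑ i ∈ I.filter (fun i => ¬ pr i < 1), pr i
      = ∑ i ∈ I, pr i := Finset.sum_filter_add_sum_filter_not I _ pr
  have hcomp1 : ∀ i ∈ I.filter (fun i => ¬ pr i < 1), pr i = 1 := by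
    intro i hi
    obtain ⟨hiI, hnlt⟩ := Finset.mem_filter.mp hi
    exact le_antisymm (hle i hiI) (not_lt.mp hnlt)
  have hcompsum : ∑ i ∈ I.filter (fun i => ¬ pr i < 1), pr i
      = ((I.filter (fun i => ¬ pr i < 1)).card : ℝ) := by
    rw [Finset.sum_congr rfl hcomp1]; simp
  have hcards : A.card + (I.filter (fun i => ¬ pr i < 1)).card = I.card :=
    Finset.card_filter_add_card_filter_not _
  have hcardsR : (A.card : ℝ) + ((I.filter (fun i => ¬ pr i < 1)).card : ℝ)
      = (I.card : ℝ) := by exact_mod_cast hcards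
  have hsumA : ∑ i ∈ A, pr i = (A.card : ℝ) - 1 := by
    rw [hcompsum, hsum] at hsplit; linarith
  have hAnonneg : 0 ≤ ∑ i ∈ A, pr i := by
    apply Finset.sum_nonneg
    intro i hi
    exact (hpos i (Finset.mem_filter.mp hi).1).le
  have hA2 : 1 < A.card := by
    by_contra h
    push_neg at h
    interval_cases hAc : A.card
    · simp [Finset.card_eq_zero.mp hAc] at hsumA
    · obtain ⟨a, ha⟩ := Finset.card_eq_one.mp hAc
      rw [ha] at hsumA
      simp [hAc] at hsumA
      have haA : a ∈ A := by rw [ha]; exact Finset.mem_singleton_self a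
      have := hpos a (Finset.mem_filter.mp haA).1
      linarith
  obtain ⟨a, ha, b, hb, hab⟩ := Finset.one_lt_card.mp hA2
  obtain ⟨haI, halt⟩ := Finset.mem_filter.mp ha
  obtain ⟨hbI, hblt⟩ := Finset.mem_filter.mp hb
  constructor
  · exact ⟨a, haI, b, hbI, hab, ⟨hpos a haI, halt⟩, ⟨hpos b hbI, hblt⟩⟩
  · intro i hi hmin
    have hxa : c * ((I.card : ℝ) - 1) * |β a| / S < 1 := by
      have := halt
      rw [hpr a haI] at this
      rcases min_lt_iff.mp this with h | h
      · linarith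
      · exact h
    have hxi : c * ((I.card : ℝ) - 1) * |β i| / S ≤
        c * ((I.card : ℝ) - 1) * |β a| / S := by
      apply (div_le_div_iff_of_pos_right hS).mpr
      exact mul_le_mul_of_nonneg_left (hmin a haI) (mul_nonneg (by linarith) hKpos.le)
    calc pr i ≤ c * ((I.card : ℝ) - 1) * |β i| / S := by
            rw [hpr i hi]; exact min_le_right _ _
      _ < 1 := lt_of_le_of_lt hxi hxa
end

section
/- The sum ∑_{j∈I} β̃_j² (1-p_j)/p_j is bounded above by ‖β̃‖₁²/(K̃-1)². -/
open Finset

/-- The variance-type sum `∑_{j∈I} β̃_j² (1-p_j)/p_j` is bounded by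
`‖β̃‖₁²/(K̃-1)²`. -/
theorem stmt_7 {p : ℕ} (β : Fin p → ℝ)
    (I : Finset (Fin p)) (hI : I = Finset.univ.filter (fun i => β i ≠ 0))
    (hK : 2 ≤ I.card) (c : ℝ) (hc : 1 ≤ c)
    (pr : Fin p → ℝ)
    (hpr : ∀ i ∈ I, pr i = min 1 (c * ((I.card : ℝ) - 1) * |β i| / ∑ j, |β j|))
    (hsum : ∑ i ∈ I, pr i = (I.card : ℝ) - 1) :
    ∑ j ∈ I, (β j)^2 * (1 - pr j) / pr j ≤ (∑ j, |β j|)^2 / ((I.card : ℝ) - 1)^2 := by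
  set S := ∑ j, |β j| with hS_def
  have hne : I.Nonempty := Finset.card_pos.mp (by omega)
  obtain ⟨i0, hi0⟩ := hne
  have hβi0 : β i0 ≠ 0 := by rw [hI] at hi0; exact (Finset.mem_filter.mp hi0).2
  have hS : 0 < S := by
    have h1 : |β i0| ≤ S :=
      Finset.single_le_sum (fun j _ => abs_nonneg (β j)) (Finset.mem_univ i0)
    have := abs_pos.mpr hβi0
    linarith
  have hK1 : (1:ℝ) ≤ (I.card:ℝ) - 1 := by
    have : (2:ℝ) ≤ (I.card:ℝ) := by exact_mod_cast hK
    linarith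
  have hK10 : (0:ℝ) < (I.card:ℝ) - 1 := by linarith
  set T := S / ((I.card:ℝ) - 1) with hT
  have hT0 : 0 < T := div_pos hS hK10
  have key : ∀ j ∈ I, (β j)^2 * (1 - pr j) / pr j ≤ T^2 * (1 - pr j) := by
    intro j hj
    have hβj : β j ≠ 0 := by rw [hI] at hj; exact (Finset.mem_filter.mp hj).2
    have ha : 0 < |β j| := abs_pos.mpr hβj
    have hprj := hpr j hj
    have hx : 0 < c * ((I.card:ℝ) - 1) * |β j| / S := by positivity
    have hq0 : 0 < pr j := by rw [hprj]; exact lt_min one_pos hx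
    have hq1 : pr j ≤ 1 := by rw [hprj]; exact min_le_left _ _
    rcases eq_or_lt_of_le hq1 with h1 | h1
    · rw [h1]; simp
    · have hxlt : c * ((I.card:ℝ) - 1) * |β j| / S < 1 := by
        by_contra h
        push_neg at h
        rw [hprj, min_eq_left h] at h1
        exact lt_irrefl _ h1
      have hqeq : pr j = c * ((I.card:ℝ) - 1) * |β j| / S := by
        rw [hprj, min_eq_right hxlt.le]
      have hcalc : c * ((I.card:ℝ) - 1) * |β j| / S * (S / ((I.card:ℝ)-1)) = c * |β j| := by
        field_simp
      have h1' : |β j| ≤ pr j * T := by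
        rw [hqeq, hT, hcalc]
        nlinarith
      have hlt : c * ((I.card:ℝ) - 1) * |β j| < S := (div_lt_one hS).mp hxlt
      have h2' : |β j| ≤ T := by
        rw [hT, le_div_iff₀ hK10]
        nlinarith
      rw [← sq_abs, div_le_iff₀ hq0]
      nlinarith [mul_nonneg (sub_nonneg.mpr h1') ha.le,
        mul_nonneg (sub_nonneg.mpr h2') hq0.le,
        mul_nonneg (mul_nonneg (sub_nonneg.mpr h1') ha.le) (sub_nonneg.mpr hq1),
        mul_nonneg (mul_nonneg (sub_nonneg.mpr h2') (mul_nonneg hq0.le hT0.le)) (sub_nonneg.mpr hq1)]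
  calc ∑ j ∈ I, (β j)^2 * (1 - pr j) / pr j
      ≤ ∑ j ∈ I, T^2 * (1 - pr j) := Finset.sum_le_sum key
    _ = T^2 * ∑ j ∈ I, (1 - pr j) := by rw [Finset.mul_sum]
    _ = T^2 := by
        rw [Finset.sum_sub_distrib, Finset.sum_const, hsum]
        simp
    _ = S^2 / ((I.card:ℝ) - 1)^2 := by rw [hT, div_pow]
end

section
/- For any f ∈ ℝ^n, the one-step randomized estimator β* satisfies E*‖f − Zβ*‖² ≤ ‖f − Zβ̃‖² + ‖β̃‖₁²/(K̃−1)², where ‖·‖² denotes the empirical squared norm ‖v‖² = n⁻¹∑v_i². -/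
open Finset

/-- For any vector `f ∈ ℝⁿ`, the one-step randomized estimator `β*` satisfies
`E*‖f − Zβ*‖² ≤ ‖f − Zβ̃‖² + ‖β̃‖₁²/(K̃−1)²`, where `‖v‖² = n⁻¹∑ v_i²` and the
diagonal entries of `Z'Z/n` equal 1. -/
theorem stmt_8 {n p : ℕ} (Z : Matrix (Fin n) (Fin p) ℝ)
    (hdiag : ∀ j, (∑ i, (Z i j)^2) / n = 1)
    (f : Fin n → ℝ) (β : Fin p → ℝ)
    (I : Finset (Fin p)) (hI : I = Finset.univ.filter (fun i => β i ≠ 0))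
    (hK : 2 ≤ I.card) (c : ℝ) (hc : 1 ≤ c)
    (pr : Fin p → ℝ)
    (hpr : ∀ i ∈ I, pr i = min 1 (c * ((I.card : ℝ) - 1) * |β i| / ∑ j, |β j|))
    (hsum : ∑ i ∈ I, pr i = (I.card : ℝ) - 1) :
    ∑ i ∈ I, (1 - pr i) *
        ((∑ t, (f t - Z.mulVec (fun j => if j = i then 0 else β j / pr j) t)^2) / n)
      ≤ (∑ t, (f t - Z.mulVec β t)^2) / n
        + (∑ j, |β j|)^2 / ((I.card : ℝ) - 1)^2 := by
  classical
  obtain ⟨i0, hi0⟩ : I.Nonempty := Finset.card_pos.mp (by omega)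
  -- n is positive
  have hn : 0 < n := by
    rcases Nat.eq_zero_or_pos n with h | h
    · exfalso; have h0 := hdiag i0; subst h; simp at h0
    · exact h
  have hnR : (0:ℝ) < n := by exact_mod_cast hn
  set L : ℝ := ∑ j, |β j| with hLdef
  set K : ℝ := (I.card : ℝ) with hKdef
  have hK1 : (1:ℝ) ≤ K - 1 := by
    have h2 : (2:ℝ) ≤ K := by rw [hKdef]; exact_mod_cast hK
    linarith
  have hc0 : (0:ℝ) < c := lt_of_lt_of_le one_pos hc
  have hβ0 : ∀ j, j ∉ I → β j = 0 := by
    intro j hj; by_contra hb; exact hj (by rw [hI]; simp [hb])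
  have hβne : ∀ j ∈ I, β j ≠ 0 := by
    intro j hj; rw [hI] at hj; simpa using hj
  have hLpos : 0 < L := by
    have h1 : |β i0| ≤ L :=
      Finset.single_le_sum (f := fun j => |β j|) (fun j _ => abs_nonneg _)
        (Finset.mem_univ i0)
    have h2 : 0 < |β i0| := abs_pos.mpr (hβne i0 hi0)
    linarith
  have hprpos : ∀ i ∈ I, 0 < pr i := by
    intro i hi
    rw [hpr i hi]
    have h2 : 0 < |β i| := abs_pos.mpr (hβne i hi)
    have h3 : 0 < c * (K - 1) * |β i| / L :=
      div_pos (mul_pos (mul_pos hc0 (by linarith)) h2) hLpos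
    exact lt_min one_pos h3
  have hprle : ∀ i ∈ I, pr i ≤ 1 := by
    intro i hi; rw [hpr i hi]; exact min_le_left _ _
  have hqsum : ∑ i ∈ I, (1 - pr i) = 1 := by
    rw [Finset.sum_sub_distrib, hsum, Finset.sum_const, nsmul_eq_mul, mul_one]
    rw [← hKdef]; ring
  set m : Fin p → ℝ := fun j => β j / pr j with hm
  have hm0 : ∀ j, j ∉ I → m j = 0 := by
    intro j hj; simp [hm, hβ0 j hj]
  have hmβ : ∀ j ∈ I, m j * pr j = β j := by
    intro j hj; exact div_mul_cancel₀ (β j) (hprpos j hj).ne'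
  set g : Fin n → ℝ := fun t => f t - Z.mulVec β t with hg
  set w : Fin n → ℝ := fun t => ∑ j ∈ I, (1 - pr j) * m j * Z t j with hw
  have hwid : ∀ t, ∑ i ∈ I, (1 - pr i) * m i * Z t i = w t := fun t => rfl
  -- column norms
  have hcol : ∀ i, ∑ t, (Z t i)^2 = (n:ℝ) := by
    intro i
    have := hdiag i
    rwa [div_eq_one_iff_eq hnR.ne'] at this
  -- decomposition of the residual
  have hdecomp : ∀ i ∈ I, ∀ t,
      f t - Z.mulVec (fun j => if j = i then 0 else β j / pr j) t
        = (g t - w t) + m i * Z t i := by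
    intro i hi t
    have e1 : Z.mulVec (fun j => if j = i then 0 else β j / pr j) t
        = (∑ j, Z t j * m j) - Z t i * m i := by
      simp only [Matrix.mulVec, dotProduct]
      have e : ∀ j ∈ Finset.univ, Z t j * (if j = i then 0 else β j / pr j)
          = Z t j * m j - (if j = i then Z t i * m i else 0) := by
        intro j _
        by_cases hji : j = i
        · subst hji; simp [hm]
        · simp [hji, hm]
      rw [Finset.sum_congr rfl e, Finset.sum_sub_distrib,
        Finset.sum_ite_eq' Finset.univ i (fun _ => Z t i * m i)]
      simp
    have e2 : ∑ j, Z t j * m j = Z.mulVec β t + w t := by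
      have e3 : ∑ j, (Z t j * m j - Z t j * β j) = w t := by
        have e5 : ∑ j ∈ I, (Z t j * m j - Z t j * β j)
            = ∑ j, (Z t j * m j - Z t j * β j) :=
          Finset.sum_subset (Finset.subset_univ I)
            (fun j _ hj => by simp [hm0 j hj, hβ0 j hj])
        rw [← e5, ← hwid t]
        apply Finset.sum_congr rfl
        intro j hj
        rw [← hmβ j hj]
        ring
      have e4 : Z.mulVec β t = ∑ j, Z t j * β j := by
        simp only [Matrix.mulVec, dotProduct]
      rw [e4]
      rw [Finset.sum_sub_distrib] at e3
      linarith
    rw [e1, e2, hg]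
    ring
  set D : ℝ := ∑ i ∈ I, (1 - pr i) * (m i)^2 with hD
  -- the key identity for the weighted sum
  have hA : ∑ i ∈ I, (1 - pr i) *
      (∑ t, (f t - Z.mulVec (fun j => if j = i then 0 else β j / pr j) t)^2)
      = ((∑ t, (g t)^2) - (∑ t, (w t)^2)) + (n:ℝ) * D := by
    have h1 : ∀ i ∈ I, (1 - pr i) *
        (∑ t, (f t - Z.mulVec (fun j => if j = i then 0 else β j / pr j) t)^2)
        = ∑ t, (1 - pr i) * ((g t - w t) + m i * Z t i)^2 := by
      intro i hi
      rw [Finset.mul_sum]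
      exact Finset.sum_congr rfl (fun t _ => by rw [hdecomp i hi t])
    have h2 : ∀ t, ∑ i ∈ I, (1 - pr i) * ((g t - w t) + m i * Z t i)^2
        = ((g t)^2 - (w t)^2) + ∑ i ∈ I, (1 - pr i) * (m i)^2 * (Z t i)^2 := by
      intro t
      have e : ∀ i ∈ I, (1 - pr i) * ((g t - w t) + m i * Z t i)^2
          = (1 - pr i) * (g t - w t)^2
            + (2 * (g t - w t)) * ((1 - pr i) * m i * Z t i)
            + (1 - pr i) * (m i)^2 * (Z t i)^2 := fun i _ => by ring
      rw [Finset.sum_congr rfl e, Finset.sum_add_distrib, Finset.sum_add_distrib,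
        ← Finset.sum_mul, hqsum, one_mul, ← Finset.mul_sum, hwid t]
      ring
    have h3 : ∑ t, ∑ i ∈ I, (1 - pr i) * (m i)^2 * (Z t i)^2 = (n:ℝ) * D := by
      rw [Finset.sum_comm, hD, Finset.mul_sum]
      apply Finset.sum_congr rfl
      intro i _
      rw [← Finset.mul_sum, hcol i]
      ring
    calc ∑ i ∈ I, (1 - pr i) *
        (∑ t, (f t - Z.mulVec (fun j => if j = i then 0 else β j / pr j) t)^2)
        = ∑ i ∈ I, ∑ t, (1 - pr i) * ((g t - w t) + m i * Z t i)^2 :=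
          Finset.sum_congr rfl h1
      _ = ∑ t, ∑ i ∈ I, (1 - pr i) * ((g t - w t) + m i * Z t i)^2 :=
          Finset.sum_comm
      _ = ∑ t, (((g t)^2 - (w t)^2)
            + ∑ i ∈ I, (1 - pr i) * (m i)^2 * (Z t i)^2) :=
          Finset.sum_congr rfl (fun t _ => h2 t)
      _ = (∑ t, ((g t)^2 - (w t)^2))
            + ∑ t, ∑ i ∈ I, (1 - pr i) * (m i)^2 * (Z t i)^2 :=
          Finset.sum_add_distrib
      _ = ((∑ t, (g t)^2) - (∑ t, (w t)^2)) + (n:ℝ) * D := by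
          rw [Finset.sum_sub_distrib, h3]
  -- bound on D
  have hDle : D ≤ L^2 / (K - 1)^2 := by
    have step : ∀ i ∈ I, (1 - pr i) * (m i)^2 ≤ (1 - pr i) * (L^2 / (K - 1)^2) := by
      intro i hi
      have hq : 0 ≤ 1 - pr i := by linarith [hprle i hi]
      rcases eq_or_lt_of_le (hprle i hi) with h1 | h1
      · rw [← h1]; simp
      · have hβi : |β i| ≠ 0 := abs_ne_zero.mpr (hβne i hi)
        have hpi : pr i = c * (K - 1) * |β i| / L := by
          have heq := hpr i hi
          rcases min_cases 1 (c * (K - 1) * |β i| / L) with ⟨h2, _⟩ | ⟨h2, _⟩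
          · rw [heq, h2] at h1; exact absurd h1 (lt_irrefl 1)
          · rw [heq, h2]
        have hK0 : K - 1 ≠ 0 := by linarith
        have hmi : (m i)^2 = L^2 / (c^2 * (K - 1)^2) := by
          show (β i / pr i)^2 = L^2 / (c^2 * (K - 1)^2)
          rw [hpi, div_div_eq_mul_div, div_pow, mul_pow, mul_pow (c*(K-1)) (|β i|),
            mul_pow, sq_abs]
          rw [mul_comm ((β i)^2) (L^2)]
          exact mul_div_mul_right (L^2) (c^2 * (K-1)^2) (pow_ne_zero 2 (hβne i hi))
        rw [hmi]
        apply mul_le_mul_of_nonneg_left _ hq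
        apply div_le_div_of_nonneg_left (by positivity) (by positivity)
        have hcsq : 1 ≤ c^2 := by nlinarith
        nlinarith [sq_nonneg (K - 1)]
    calc D ≤ ∑ i ∈ I, (1 - pr i) * (L^2 / (K - 1)^2) := Finset.sum_le_sum step
      _ = L^2 / (K - 1)^2 := by rw [← Finset.sum_mul, hqsum, one_mul]
  -- assemble
  have hLHS : ∑ i ∈ I, (1 - pr i) *
      ((∑ t, (f t - Z.mulVec (fun j => if j = i then 0 else β j / pr j) t)^2) / n)
      = (∑ i ∈ I, (1 - pr i) *
        (∑ t, (f t - Z.mulVec (fun j => if j = i then 0 else β j / pr j) t)^2)) / n := by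
    rw [Finset.sum_div]
    exact Finset.sum_congr rfl (fun i _ => by rw [mul_div_assoc])
  rw [hLHS, hA]
  have hwnn : 0 ≤ ∑ t, (w t)^2 := Finset.sum_nonneg (fun t _ => sq_nonneg _)
  have hnum : ((∑ t, (g t)^2) - (∑ t, (w t)^2)) + (n:ℝ) * D
      ≤ (∑ t, (g t)^2) + (n:ℝ) * (L^2 / (K - 1)^2) := by
    have := mul_le_mul_of_nonneg_left hDle hnR.le
    linarith
  calc (((∑ t, (g t)^2) - (∑ t, (w t)^2)) + (n:ℝ) * D) / n
      ≤ ((∑ t, (g t)^2) + (n:ℝ) * (L^2 / (K - 1)^2)) / n := by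
        apply div_le_div_of_nonneg_right hnum hnR.le
    _ = (∑ t, (g t)^2) / n + L^2 / (K - 1)^2 := by
        rw [add_div, mul_div_cancel_left₀ _ hnR.ne']
    _ = (∑ t, (f t - Z.mulVec β t)^2) / n + (∑ j, |β j|)^2 / ((I.card:ℝ) - 1)^2 := by
        rw [← hLdef, ← hKdef]
end

section
/- For any f ∈ ℝ^n, the final randomized estimator β̂, obtained by iterating the one-step randomization K̃−K times, has at most K non-zero coordinates and satisfies E*‖f − Zβ̂‖² ≤ ‖f − Zβ̃‖² + ‖β̃‖₁² (1/(K−1) − 1/(K̃−1)). -/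
open Finset

/-- The support (set of non-zero coordinates) of a vector. -/
noncomputable def supp {p : ℕ} (β : Fin p → ℝ) : Finset (Fin p) :=
  Finset.univ.filter (fun i => β i ≠ 0)

/-- One step of the randomized selection: drop coordinate `i` and rescale the
remaining coordinates by `1 / P β j`. -/
noncomputable def dropC {p : ℕ} (P : (Fin p → ℝ) → Fin p → ℝ)
    (β : Fin p → ℝ) (i : Fin p) : Fin p → ℝ :=
  fun j => if j = i then 0 else β j / P β j

/-- `P` assigns to each vector `β` with at least two non-zero coordinates valid
randomization probabilities `p_i = min{1, c(K̃-1)|β_i|/‖β‖₁}` summing to `K̃-1`. -/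
def ValidP {p : ℕ} (P : (Fin p → ℝ) → Fin p → ℝ) : Prop :=
  ∀ β : Fin p → ℝ, 2 ≤ (supp β).card →
    (∃ c : ℝ, 1 ≤ c ∧ ∀ i ∈ supp β,
      P β i = min 1 (c * (((supp β).card : ℝ) - 1) * |β i| / ∑ j, |β j|)) ∧
    ∑ i ∈ supp β, P β i = ((supp β).card : ℝ) - 1

/-- Expectation of `loss` after `t` steps of the randomized selection started at
`β`, where at each step coordinate `i` is dropped with probability `1 - P β i`. -/
noncomputable def iterExp {p : ℕ} (P : (Fin p → ℝ) → Fin p → ℝ)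
    (loss : (Fin p → ℝ) → ℝ) : ℕ → (Fin p → ℝ) → ℝ
  | 0, β => loss β
  | (t+1), β => ∑ i ∈ supp β, (1 - P β i) * iterExp P loss t (dropC P β i)

/-- `γ` is reachable from `β` in exactly `t` steps of the randomized selection. -/
def Reach {p : ℕ} (P : (Fin p → ℝ) → Fin p → ℝ) :
    ℕ → (Fin p → ℝ) → (Fin p → ℝ) → Prop
  | 0, β, γ => γ = β
  | (t+1), β, γ => ∃ i ∈ supp β, Reach P t (dropC P β i) γ

lemma mem_supp {p : ℕ} {β : Fin p → ℝ} {i : Fin p} : i ∈ supp β ↔ β i ≠ 0 := by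
  simp [supp]

lemma supp_dropC_subset {p : ℕ} (P : (Fin p → ℝ) → Fin p → ℝ) (β : Fin p → ℝ) (i : Fin p) :
    supp (dropC P β i) ⊆ (supp β).erase i := by
  intro j hj
  rw [mem_supp] at hj
  simp only [dropC] at hj
  rcases eq_or_ne j i with rfl | hne
  · simp at hj
  · rw [if_neg hne] at hj
    refine Finset.mem_erase.2 ⟨hne, mem_supp.2 fun h => hj (by simp [h])⟩

lemma reach_card {p : ℕ} (P : (Fin p → ℝ) → Fin p → ℝ) :
    ∀ (t : ℕ) (β γ : Fin p → ℝ), Reach P t β γ → (supp γ).card ≤ (supp β).card - t := by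
  intro t
  induction t with
  | zero => intro β γ h; rw [h]; simp
  | succ t ih =>
    intro β γ h
    obtain ⟨i, hi, hr⟩ := h
    have h1 := ih _ _ hr
    have h2 : (supp (dropC P β i)).card ≤ (supp β).card - 1 := by
      calc (supp (dropC P β i)).card ≤ ((supp β).erase i).card :=
            Finset.card_le_card (supp_dropC_subset P β i)
        _ = (supp β).card - 1 := Finset.card_erase_of_mem hi
    omega

lemma mean_sq {n p : ℕ} (S : Finset (Fin p)) (w : Fin p → ℝ)
    (hw : ∑ i ∈ S, w i = 1) (a : Fin n → ℝ) (v : Fin p → Fin n → ℝ) :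
    ∑ i ∈ S, w i * ∑ t, (a t + v i t)^2
      = ∑ t, (a t + ∑ i ∈ S, w i * v i t)^2
        - ∑ t, (∑ i ∈ S, w i * v i t)^2
        + ∑ i ∈ S, w i * ∑ t, (v i t)^2 := by
  have key : ∀ t, ∑ i ∈ S, w i * (a t + v i t)^2
      = (a t)^2 * (∑ i ∈ S, w i) + 2 * a t * (∑ i ∈ S, w i * v i t)
        + ∑ i ∈ S, w i * (v i t)^2 := by
    intro t
    rw [Finset.mul_sum, Finset.mul_sum, ← Finset.sum_add_distrib, ← Finset.sum_add_distrib]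
    exact Finset.sum_congr rfl fun i _ => by ring
  have lhs : ∑ i ∈ S, w i * ∑ t, (a t + v i t)^2
      = ∑ t, ∑ i ∈ S, w i * (a t + v i t)^2 := by
    simp_rw [Finset.mul_sum]; rw [Finset.sum_comm]
  have rhs : ∑ i ∈ S, w i * ∑ t, (v i t)^2 = ∑ t, ∑ i ∈ S, w i * (v i t)^2 := by
    simp_rw [Finset.mul_sum]; rw [Finset.sum_comm]
  rw [lhs, rhs, ← Finset.sum_sub_distrib, ← Finset.sum_add_distrib]
  refine Finset.sum_congr rfl fun t _ => ?_
  rw [key t, hw]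
  ring

lemma l1_pos {p : ℕ} {β : Fin p → ℝ} (h : 1 ≤ (supp β).card) : 0 < ∑ j, |β j| := by
  have h0 : 0 < (supp β).card := h
  obtain ⟨i, hi⟩ := Finset.card_pos.1 h0
  have hβ : β i ≠ 0 := mem_supp.1 hi
  calc (0:ℝ) < |β i| := abs_pos.2 hβ
    _ ≤ ∑ j, |β j| :=
        Finset.single_le_sum (fun j _ => abs_nonneg (β j)) (Finset.mem_univ i)

lemma validP_facts {p : ℕ} {P : (Fin p → ℝ) → Fin p → ℝ} (hP : ValidP P)
    {β : Fin p → ℝ} (h2 : 2 ≤ (supp β).card) :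
    ∃ q : ℝ, 0 < q ∧ q * (((supp β).card : ℝ) - 1) ≤ ∑ j, |β j| ∧
      (∀ i ∈ supp β, 0 < P β i ∧ P β i ≤ 1 ∧ P β i * q ≤ |β i| ∧
        (1 - P β i) * |β i| = (1 - P β i) * (P β i * q)) ∧
      ∑ i ∈ supp β, (1 - P β i) = 1 := by
  obtain ⟨⟨c, hc, hform⟩, hsum⟩ := hP β h2
  set M : ℝ := ((supp β).card : ℝ) - 1 with hM
  have hM1 : (1:ℝ) ≤ M := by
    have : (2:ℝ) ≤ ((supp β).card : ℝ) := by exact_mod_cast h2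
    simp [hM]; linarith
  set L : ℝ := ∑ j, |β j| with hL
  have hLpos : 0 < L := l1_pos (by omega)
  have hcM : 0 < c * M := by positivity
  refine ⟨L / (c * M), by positivity, ?_, ?_, ?_⟩
  · rw [div_mul_eq_mul_div, div_le_iff₀ hcM]
    nlinarith [mul_nonneg (mul_nonneg hLpos.le (by linarith : (0:ℝ) ≤ M))
      (by linarith : (0:ℝ) ≤ c - 1)]
  · intro i hi
    have hβi : 0 < |β i| := abs_pos.2 (mem_supp.1 hi)
    have hx : 0 < c * M * |β i| / L := by positivity
    have hPi : P β i = min 1 (c * M * |β i| / L) := hform i hi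
    have hxq : (c * M * |β i| / L) * (L / (c * M)) = |β i| := by
      field_simp
    refine ⟨?_, ?_, ?_, ?_⟩
    · rw [hPi]; exact lt_min one_pos hx
    · rw [hPi]; exact min_le_left _ _
    · rw [hPi]
      calc min 1 (c * M * |β i| / L) * (L / (c * M))
          ≤ (c * M * |β i| / L) * (L / (c * M)) := by
            apply mul_le_mul_of_nonneg_right (min_le_right _ _) (by positivity)
        _ = |β i| := hxq
    · rcases min_cases 1 (c * M * |β i| / L) with ⟨hmin, _⟩ | ⟨hmin, _⟩
      · rw [hPi, hmin]; ring
      · rw [hPi, hmin, hxq]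
  · rw [Finset.sum_sub_distrib, hsum, Finset.sum_const, nsmul_eq_mul, mul_one, hM]
    ring

lemma supp_dropC_eq {p : ℕ} {P : (Fin p → ℝ) → Fin p → ℝ} (hP : ValidP P)
    {β : Fin p → ℝ} (h2 : 2 ≤ (supp β).card) {i : Fin p} (hi : i ∈ supp β) :
    supp (dropC P β i) = (supp β).erase i := by
  obtain ⟨q, hq, hqM, hPt, hsum⟩ := validP_facts hP h2
  refine Finset.Subset.antisymm (supp_dropC_subset P β i) ?_
  intro j hj
  obtain ⟨hne, hjs⟩ := Finset.mem_erase.1 hj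
  rw [mem_supp]
  simp only [dropC, if_neg hne]
  exact div_ne_zero (mem_supp.1 hjs) (hPt j hjs).1.ne'

lemma l1_dropC {p : ℕ} {P : (Fin p → ℝ) → Fin p → ℝ} (hP : ValidP P)
    {β : Fin p → ℝ} (h2 : 2 ≤ (supp β).card) {i : Fin p} (hi : i ∈ supp β) :
    ∑ j, |dropC P β i j| ≤ ∑ j, |β j| := by
  obtain ⟨q, hq, hqM, hPt, hsum⟩ := validP_facts hP h2
  have h1 : ∑ j, |dropC P β i j| = ∑ j ∈ (supp β).erase i, |dropC P β i j| := by
    refine (Finset.sum_subset (Finset.subset_univ _) fun j _ hj => ?_).symm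
    rcases eq_or_ne j i with rfl | hne
    · simp [dropC]
    · have hjs : j ∉ supp β := fun h => hj (Finset.mem_erase.2 ⟨hne, h⟩)
      have : β j = 0 := by by_contra h; exact hjs (mem_supp.2 h)
      simp [dropC, this, if_neg hne]
  have h2' : ∀ j ∈ (supp β).erase i, |dropC P β i j| = |β j| + (1 - P β j) * q := by
    intro j hj
    obtain ⟨hne, hjs⟩ := Finset.mem_erase.1 hj
    obtain ⟨hP0, hP1, hPq, he⟩ := hPt j hjs
    simp only [dropC, if_neg hne, abs_div, abs_of_pos hP0]
    field_simp
    nlinarith [he]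
  calc ∑ j, |dropC P β i j| = ∑ j ∈ (supp β).erase i, (|β j| + (1 - P β j) * q) := by
        rw [h1]; exact Finset.sum_congr rfl h2'
    _ = (∑ j ∈ supp β, |β j| - |β i|)
        + (∑ j ∈ supp β, (1 - P β j) - (1 - P β i)) * q := by
        rw [Finset.sum_add_distrib, Finset.sum_erase_eq_sub hi, ← Finset.sum_mul,
          Finset.sum_erase_eq_sub hi]
    _ = ∑ j ∈ supp β, |β j| - |β i| + P β i * q := by rw [hsum]; ring
    _ ≤ ∑ j ∈ supp β, |β j| := by have := (hPt i hi).2.2.1; linarith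
    _ ≤ ∑ j, |β j| :=
        Finset.sum_le_sum_of_subset_of_nonneg (Finset.subset_univ _)
          (fun j _ _ => abs_nonneg _)

lemma mulVec_apply {n p : ℕ} (Z : Matrix (Fin n) (Fin p) ℝ) (d : Fin p → ℝ) (t : Fin n) :
    Z.mulVec d t = ∑ j, Z t j * d j := rfl

lemma step_bound {n p : ℕ} (Z : Matrix (Fin n) (Fin p) ℝ)
    (hZ : ∀ j, ∑ t, (Z t j)^2 = (n:ℝ))
    (f : Fin n → ℝ) {P : (Fin p → ℝ) → Fin p → ℝ} (hP : ValidP P)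
    {β : Fin p → ℝ} (h2 : 2 ≤ (supp β).card) :
    ∑ i ∈ supp β, (1 - P β i) * ∑ t, (f t - Z.mulVec (dropC P β i) t)^2
      ≤ (∑ t, (f t - Z.mulVec β t)^2)
        + (n:ℝ) * ((∑ j, |β j|) / (((supp β).card : ℝ) - 1))^2 := by
  obtain ⟨q, hq, hqM, hPt, hsum⟩ := validP_facts hP h2
  have hM1 : (1:ℝ) ≤ ((supp β).card : ℝ) - 1 := by
    have : (2:ℝ) ≤ ((supp β).card : ℝ) := by exact_mod_cast h2
    linarith
  -- Step A : rewrite each loss via a + v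
  have stepA : ∀ i t, f t - Z.mulVec (dropC P β i) t
      = (f t - Z.mulVec (fun j => β j / P β j) t) + (β i / P β i) * Z t i := by
    intro i t
    have hmv : Z.mulVec (dropC P β i) t
        = Z.mulVec (fun j => β j / P β j) t - Z t i * (β i / P β i) := by
      rw [mulVec_apply, mulVec_apply]
      have h1 : ∀ j, Z t j * dropC P β i j
          = Z t j * (β j / P β j) - (if j = i then Z t j * (β j / P β j) else 0) := by
        intro j
        simp only [dropC]
        split <;> simp_all
      rw [Finset.sum_congr rfl fun j _ => h1 j, Finset.sum_sub_distrib,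
        Finset.sum_ite_eq' Finset.univ i (fun j => Z t j * (β j / P β j))]
      simp
    rw [hmv]; ring
  -- Step C : the mean of a + v is the original residual
  have stepC : ∀ t, (f t - Z.mulVec (fun j => β j / P β j) t)
      + (∑ i ∈ supp β, (1 - P β i) * ((β i / P β i) * Z t i))
      = f t - Z.mulVec β t := by
    intro t
    have hV : ∑ i ∈ supp β, (1 - P β i) * ((β i / P β i) * Z t i)
        = Z.mulVec (fun j => β j / P β j) t - Z.mulVec β t := by
      have h1 : ∀ i ∈ supp β, (1 - P β i) * ((β i / P β i) * Z t i)
          = (β i / P β i - β i) * Z t i := by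
        intro i hi
        have hP0 : P β i ≠ 0 := (hPt i hi).1.ne'
        field_simp
      rw [Finset.sum_congr rfl h1,
        Finset.sum_subset (Finset.subset_univ (supp β)) ?_]
      · rw [mulVec_apply, mulVec_apply, ← Finset.sum_sub_distrib]
        exact Finset.sum_congr rfl fun j _ => by ring
      · intro j _ hj
        have hβj : β j = 0 := by by_contra h; exact hj (mem_supp.2 h)
        simp [hβj]
    rw [hV]; ring
  -- Step D : the variance term
  have stepD : ∑ i ∈ supp β, (1 - P β i) * ∑ t, ((β i / P β i) * Z t i)^2
      ≤ (n:ℝ) * ((∑ j, |β j|) / (((supp β).card : ℝ) - 1))^2 := by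
    have h1 : ∀ i ∈ supp β, (1 - P β i) * ∑ t, ((β i / P β i) * Z t i)^2
        = (1 - P β i) * q^2 * n := by
      intro i hi
      obtain ⟨hP0, hP1, hPq, he⟩ := hPt i hi
      have hbq : (1 - P β i) * (β i / P β i)^2 = (1 - P β i) * q^2 := by
        have hβ : β i ^ 2 = |β i| ^ 2 := (sq_abs _).symm
        field_simp
        rw [hβ]
        linear_combination (|β i| + P β i * q) * he
      have hsq : ∑ t, ((β i / P β i) * Z t i)^2 = (β i / P β i)^2 * n := by
        simp only [mul_pow, ← Finset.mul_sum, hZ i]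
      rw [hsq, ← mul_assoc, hbq]
    rw [Finset.sum_congr rfl h1]
    rw [← Finset.sum_mul, ← Finset.sum_mul, hsum, one_mul]
    have hqle : q ≤ (∑ j, |β j|) / (((supp β).card : ℝ) - 1) := by
      rw [le_div_iff₀ (by linarith)]
      exact hqM
    have hsqle : q^2 ≤ ((∑ j, |β j|) / (((supp β).card : ℝ) - 1))^2 := by
      apply sq_le_sq' _ hqle
      linarith
    nlinarith [hsqle, Nat.cast_nonneg (α := ℝ) n]
  -- assemble
  have key := mean_sq (supp β) (fun i => 1 - P β i) hsum
    (fun t => f t - Z.mulVec (fun j => β j / P β j) t)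
    (fun i t => (β i / P β i) * Z t i)
  have lhs_eq : ∑ i ∈ supp β, (1 - P β i) * ∑ t, (f t - Z.mulVec (dropC P β i) t)^2
      = ∑ i ∈ supp β, (1 - P β i)
          * ∑ t, ((f t - Z.mulVec (fun j => β j / P β j) t) + (β i / P β i) * Z t i)^2 := by
    refine Finset.sum_congr rfl fun i _ => ?_
    congr 1
    exact Finset.sum_congr rfl fun t _ => by rw [stepA i t]
  rw [lhs_eq, key]
  have e1 : ∑ t, ((f t - Z.mulVec (fun j => β j / P β j) t)
        + ∑ i ∈ supp β, (1 - P β i) * ((β i / P β i) * Z t i))^2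
      = ∑ t, (f t - Z.mulVec β t)^2 :=
    Finset.sum_congr rfl fun t _ => by rw [stepC t]
  have e2 : 0 ≤ ∑ t, (∑ i ∈ supp β, (1 - P β i) * ((β i / P β i) * Z t i))^2 :=
    Finset.sum_nonneg fun t _ => sq_nonneg _
  linarith [stepD]

lemma iter_bound {n p : ℕ} (Z : Matrix (Fin n) (Fin p) ℝ)
    (hZ : ∀ j, ∑ t, (Z t j)^2 = (n:ℝ)) (hn : 0 < n)
    (f : Fin n → ℝ) {P : (Fin p → ℝ) → Fin p → ℝ} (hP : ValidP P) :
    ∀ (t : ℕ) (β : Fin p → ℝ), t + 2 ≤ (supp β).card →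
    iterExp P (fun v => (∑ s, (f s - Z.mulVec v s)^2) / n) t β
      ≤ (∑ s, (f s - Z.mulVec β s)^2) / n
        + (∑ j, |β j|)^2
          * (1/(((supp β).card : ℝ) - t - 1) - 1/(((supp β).card : ℝ) - 1)) := by
  intro t
  induction t with
  | zero =>
    intro β h
    have : (1:ℝ)/(((supp β).card : ℝ) - (0:ℕ) - 1) - 1/(((supp β).card : ℝ) - 1) = 0 := by
      norm_num
    rw [this, mul_zero, add_zero]
    exact le_of_eq rfl
  | succ t ih =>
    intro β hcard
    have h2 : 2 ≤ (supp β).card := by omega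
    obtain ⟨q, hq, hqM, hPt, hsum⟩ := validP_facts hP h2
    have hM3 : (t:ℝ) + 3 ≤ ((supp β).card : ℝ) := by
      have : t + 3 ≤ (supp β).card := by omega
      exact_mod_cast this
    set M : ℝ := ((supp β).card : ℝ) with hM
    have hLnn : (0:ℝ) ≤ ∑ j, |β j| := Finset.sum_nonneg fun j _ => abs_nonneg _
    set L : ℝ := ∑ j, |β j| with hL
    -- per-coordinate bound from the induction hypothesis
    have hIB : ∀ i ∈ supp β,
        iterExp P (fun v => (∑ s, (f s - Z.mulVec v s)^2) / n) t (dropC P β i)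
        ≤ (∑ s, (f s - Z.mulVec (dropC P β i) s)^2)/n
          + L^2 * (1/(M - t - 2) - 1/(M - 2)) := by
      intro i hi
      have hse := supp_dropC_eq hP h2 hi
      have hce : ((supp (dropC P β i)).card : ℝ) = M - 1 := by
        rw [hse, Finset.card_erase_of_mem hi]
        have h1 : 1 ≤ (supp β).card := by omega
        rw [Nat.cast_sub h1]
        simp [hM]
      have hct : t + 2 ≤ (supp (dropC P β i)).card := by
        rw [hse, Finset.card_erase_of_mem hi]; omega
      have hih := ih (dropC P β i) hct
      rw [hce] at hih
      refine hih.trans ?_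
      have d1 : (0:ℝ) < M - 1 - t - 1 := by linarith
      have d2 : (0:ℝ) < M - 1 - 1 := by linarith
      have hF : (0:ℝ) ≤ 1/(M - 1 - t - 1) - 1/(M - 1 - 1) := by
        have hle : M - 1 - t - 1 ≤ M - 1 - 1 := by
          have : (0:ℝ) ≤ (t:ℝ) := Nat.cast_nonneg t
          linarith
        have := one_div_le_one_div_of_le d1 hle
        linarith
      have hLd : (∑ j, |dropC P β i j|)^2 ≤ L^2 := by
        have h1 := l1_dropC hP h2 hi
        have h0 : (0:ℝ) ≤ ∑ j, |dropC P β i j| :=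
          Finset.sum_nonneg fun j _ => abs_nonneg _
        nlinarith
      have hmul : (∑ j, |dropC P β i j|)^2 * (1/(M - 1 - t - 1) - 1/(M - 1 - 1))
          ≤ L^2 * (1/(M - 1 - t - 1) - 1/(M - 1 - 1)) :=
        mul_le_mul_of_nonneg_right hLd hF
      have heq : L^2 * (1/(M - 1 - t - 1) - 1/(M - 1 - 1))
          = L^2 * (1/(M - t - 2) - 1/(M - 2)) := by
        have e1 : M - 1 - t - 1 = M - t - 2 := by ring
        have e2 : M - 1 - 1 = M - 2 := by ring
        rw [e1, e2]
      linarith [hmul, heq.ge, heq.le]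
    -- sum up
    have hw0 : ∀ i ∈ supp β, (0:ℝ) ≤ 1 - P β i := fun i hi => by
      linarith [(hPt i hi).2.1]
    have step1 : iterExp P (fun v => (∑ s, (f s - Z.mulVec v s)^2) / n) (t+1) β
        = ∑ i ∈ supp β, (1 - P β i)
            * iterExp P (fun v => (∑ s, (f s - Z.mulVec v s)^2) / n) t (dropC P β i) := rfl
    have step2 : ∑ i ∈ supp β, (1 - P β i)
            * iterExp P (fun v => (∑ s, (f s - Z.mulVec v s)^2) / n) t (dropC P β i)
        ≤ ∑ i ∈ supp β, (1 - P β i)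
            * ((∑ s, (f s - Z.mulVec (dropC P β i) s)^2)/n
              + L^2 * (1/(M - t - 2) - 1/(M - 2))) :=
      Finset.sum_le_sum fun i hi =>
        mul_le_mul_of_nonneg_left (hIB i hi) (hw0 i hi)
    have step3 : ∑ i ∈ supp β, (1 - P β i)
            * ((∑ s, (f s - Z.mulVec (dropC P β i) s)^2)/n
              + L^2 * (1/(M - t - 2) - 1/(M - 2)))
        = (∑ i ∈ supp β, (1 - P β i) * ∑ s, (f s - Z.mulVec (dropC P β i) s)^2)/n
          + L^2 * (1/(M - t - 2) - 1/(M - 2)) := by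
      simp_rw [mul_add, Finset.sum_add_distrib, ← Finset.sum_mul, hsum, one_mul,
        ← mul_div_assoc, Finset.sum_div]
    have hnR : (0:ℝ) < (n:ℝ) := by exact_mod_cast hn
    have step4 : (∑ i ∈ supp β, (1 - P β i) * ∑ s, (f s - Z.mulVec (dropC P β i) s)^2)/n
        ≤ (∑ s, (f s - Z.mulVec β s)^2)/n + (L/(M - 1))^2 := by
      have hsb := step_bound Z hZ f hP h2
      have h1 : (∑ i ∈ supp β, (1 - P β i) * ∑ s, (f s - Z.mulVec (dropC P β i) s)^2)/n
          ≤ ((∑ s, (f s - Z.mulVec β s)^2) + (n:ℝ) * (L/(M - 1))^2)/n := by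
        gcongr
      refine h1.trans (le_of_eq ?_)
      rw [add_div, mul_div_cancel_left₀ _ hnR.ne']
    have key2 : (L/(M-1))^2 ≤ L^2 * (1/(M-2) - 1/(M-1)) := by
      have p1 : (0:ℝ) < M - 2 := by linarith
      have p2 : (0:ℝ) < M - 1 := by linarith
      have e : 1/(M-2) - 1/(M-1) = 1/((M-2)*(M-1)) := by
        field_simp
        ring
      rw [div_pow, e]
      have hle : L^2/(M-1)^2 ≤ L^2/((M-2)*(M-1)) := by
        have hbc : (M-2)*(M-1) ≤ (M-1)^2 := by nlinarith
        have hbpos : (0:ℝ) < (M-2)*(M-1) := by positivity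
        exact div_le_div_of_nonneg_left (sq_nonneg L) hbpos hbc
      calc L^2/(M-1)^2 ≤ L^2/((M-2)*(M-1)) := hle
        _ = L^2 * (1/((M-2)*(M-1))) := by ring
    have ecast2 : M - (((t:ℕ)+1 : ℕ):ℝ) - 1 = M - (t:ℝ) - 2 := by push_cast; ring
    rw [step1, ecast2]
    have final_eq : (∑ s, (f s - Z.mulVec β s)^2)/n
          + L^2*(1/(M-2) - 1/(M-1)) + L^2*(1/(M - (t:ℝ) - 2) - 1/(M-2))
        = (∑ s, (f s - Z.mulVec β s)^2)/n + L^2*(1/(M - (t:ℝ) - 2) - 1/(M-1)) := by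
      ring
    linarith [step2, step3.le, step3.ge, step4, key2, final_eq.le, final_eq.ge]

/-- Theorem 1 (i): the final randomized estimator `β̂`, obtained by iterating the
one-step randomization `K̃ − K` times, has at most `K` non-zero coordinates and
satisfies `E*‖f − Zβ̂‖² ≤ ‖f − Zβ̃‖² + ‖β̃‖₁² (1/(K−1) − 1/(K̃−1))`. -/
theorem stmt_9 {n p : ℕ} (Z : Matrix (Fin n) (Fin p) ℝ)
    (hdiag : ∀ j, (∑ i, (Z i j)^2) / n = 1)
    (f : Fin n → ℝ) (β : Fin p → ℝ) (K : ℕ)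
    (hK3 : 3 ≤ (supp β).card) (hK2 : 2 ≤ K) (hKK : K < (supp β).card)
    (P : (Fin p → ℝ) → Fin p → ℝ) (hP : ValidP P) :
    (∀ γ, Reach P ((supp β).card - K) β γ → (supp γ).card ≤ K) ∧
    iterExp P (fun v => (∑ t, (f t - Z.mulVec v t)^2) / n) ((supp β).card - K) β
      ≤ (∑ t, (f t - Z.mulVec β t)^2) / n
        + (∑ j, |β j|)^2 * (1/((K : ℝ) - 1) - 1/(((supp β).card : ℝ) - 1)) := by
  have hsupp_ne : 0 < (supp β).card := by omega
  obtain ⟨i0, hi0⟩ := Finset.card_pos.1 hsupp_ne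
  have hn : 0 < n := by
    rcases Nat.eq_zero_or_pos n with h0 | h
    · exfalso
      have := hdiag i0
      subst h0
      simp at this
    · exact h
  have hnR : (0:ℝ) < (n:ℝ) := by exact_mod_cast hn
  have hZ : ∀ j, ∑ t, (Z t j)^2 = (n:ℝ) := by
    intro j
    have := hdiag j
    field_simp at this
    exact this
  constructor
  · intro γ hr
    have := reach_card P ((supp β).card - K) β γ hr
    omega
  · have hmain := iter_bound Z hZ hn f hP ((supp β).card - K) β (by omega)
    have hc : (((supp β).card - K : ℕ):ℝ) = ((supp β).card : ℝ) - (K:ℝ) := by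
      rw [Nat.cast_sub hKK.le]
    rw [hc] at hmain
    have e : ((supp β).card : ℝ) - (((supp β).card : ℝ) - (K:ℝ)) - 1 = (K:ℝ) - 1 := by
      ring
    rw [e] at hmain
    exact hmain
end

section
/- For any f ∈ ℝ^n, the Maurey randomized estimator β̂_M with at most K non-zero coordinates satisfies E*‖f − Zβ̂_M‖² ≤ ‖f − Zβ̃‖² + ‖β̃‖₁²/K. -/
open Finset

set_option maxHeartbeats 2000000

private lemma key_prod {K p : ℕ} (G : Fin K → Fin p → ℝ) :
    ∑ η : Fin K → Fin p, ∏ s, G s (η s) = ∏ s, ∑ j, G s j :=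
  (Fintype.prod_sum G).symm

private lemma single_moment {K p : ℕ} (q g : Fin p → ℝ) (hq1 : ∑ j, q j = 1)
    (s₀ : Fin K) :
    ∑ η : Fin K → Fin p, (∏ s, q (η s)) * g (η s₀) = ∑ j, q j * g j := by
  calc ∑ η : Fin K → Fin p, (∏ s, q (η s)) * g (η s₀)
      = ∑ η : Fin K → Fin p, ∏ s, (fun s j => if s = s₀ then q j * g j else q j) s (η s) := by
        refine Finset.sum_congr rfl fun η _ => ?_
        rw [← Finset.mul_prod_erase univ
            (fun s => (fun s j => if s = s₀ then q j * g j else q j) s (η s)) (mem_univ s₀),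
            ← Finset.mul_prod_erase univ (fun s => q (η s)) (mem_univ s₀)]
        simp only [if_pos rfl, if_true]
        rw [Finset.prod_congr rfl (fun x hx => if_neg (Finset.mem_erase.mp hx).1)]
        ring
    _ = ∏ s, ∑ j, (fun s j => if s = s₀ then q j * g j else q j) s j :=
        key_prod (fun s j => if s = s₀ then q j * g j else q j)
    _ = ∑ j, q j * g j := by
        rw [Finset.prod_congr rfl (fun s _ => show _ = if s = s₀ then (∑ j, q j * g j) else 1
          from by by_cases hs : s = s₀ <;> simp [hs, hq1])]
        simp

private lemma pair_moment {K p : ℕ} (q g h : Fin p → ℝ) (hq1 : ∑ j, q j = 1)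
    {s₀ t₀ : Fin K} (hst : s₀ ≠ t₀) :
    ∑ η : Fin K → Fin p, (∏ s, q (η s)) * (g (η s₀) * h (η t₀))
      = (∑ j, q j * g j) * (∑ j, q j * h j) := by
  have ht : t₀ ∈ univ.erase s₀ := Finset.mem_erase.mpr ⟨hst.symm, mem_univ _⟩
  calc ∑ η : Fin K → Fin p, (∏ s, q (η s)) * (g (η s₀) * h (η t₀))
      = ∑ η : Fin K → Fin p, ∏ s, (fun s j =>
          if s = s₀ then q j * g j else if s = t₀ then q j * h j else q j) s (η s) := by
        refine Finset.sum_congr rfl fun η _ => ?_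
        rw [← Finset.mul_prod_erase univ
            (fun s => (fun s j => if s = s₀ then q j * g j else if s = t₀ then q j * h j else q j) s (η s)) (mem_univ s₀),
            ← Finset.mul_prod_erase (univ.erase s₀)
            (fun s => (fun s j => if s = s₀ then q j * g j else if s = t₀ then q j * h j else q j) s (η s)) ht,
            ← Finset.mul_prod_erase univ (fun s => q (η s)) (mem_univ s₀),
            ← Finset.mul_prod_erase (univ.erase s₀) (fun s => q (η s)) ht]
        simp only [if_pos rfl, if_neg hst.symm, if_true]
        rw [Finset.prod_congr rfl (fun x hx => ?_)]
        · ring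
        · have hx1 := (Finset.mem_erase.mp hx).1
          have hx2 := (Finset.mem_erase.mp (Finset.mem_erase.mp hx).2).1
          simp only [if_neg hx2, if_neg hx1]
    _ = ∏ s, ∑ j, (fun s j =>
          if s = s₀ then q j * g j else if s = t₀ then q j * h j else q j) s j :=
        key_prod (fun s j => if s = s₀ then q j * g j else if s = t₀ then q j * h j else q j)
    _ = (∑ j, q j * g j) * (∑ j, q j * h j) := by
        rw [Finset.prod_congr rfl (fun s _ => show _ =
            if s = s₀ then (∑ j, q j * g j) else if s = t₀ then (∑ j, q j * h j) else 1
          from by by_cases hs : s = s₀ <;> by_cases hs' : s = t₀ <;> simp [hs, hs', hq1])]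
        rw [← Finset.mul_prod_erase univ _ (mem_univ s₀),
            ← Finset.mul_prod_erase (univ.erase s₀) _ ht]
        simp only [if_pos rfl, if_neg hst.symm, if_true]
        rw [Finset.prod_congr rfl (fun x hx => ?_), Finset.prod_const_one, mul_one]
        have hx1 := (Finset.mem_erase.mp hx).1
        have hx2 := (Finset.mem_erase.mp (Finset.mem_erase.mp hx).2).1
        simp only [if_neg hx2, if_neg hx1]

private lemma sum_sum_ite {K : ℕ} (X Y : ℝ) :
    (∑ s : Fin K, ∑ t : Fin K, if s = t then X else Y)
      = K * (X - Y) + (K:ℝ)^2 * Y := by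
  have hsplit : ∀ s : Fin K, (∑ t : Fin K, if s = t then X else Y)
      = (X - Y) + K * Y := by
    intro s
    have h : (fun t : Fin K => if s = t then X else Y)
        = fun t => (if s = t then X - Y else 0) + Y := by
      funext t; split <;> ring
    rw [h, Finset.sum_add_distrib, Finset.sum_ite_eq, if_pos (mem_univ s),
        Finset.sum_const, card_univ, Fintype.card_fin, nsmul_eq_mul]
  rw [Finset.sum_congr rfl fun s _ => hsplit s, Finset.sum_const, card_univ,
      Fintype.card_fin, nsmul_eq_mul]
  ring

private lemma moment_ident {K p : ℕ} (hK : 0 < K) (q c : Fin p → ℝ)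
    (hq1 : ∑ j, q j = 1) (a : ℝ) :
    ∑ η : Fin K → Fin p, (∏ s, q (η s)) * (a - (∑ s, c (η s)) / K)^2
      = (a - ∑ j, q j * c j)^2
        + ((∑ j, q j * (c j * c j)) - (∑ j, q j * c j)^2) / K := by
  have hKne : (K:ℝ) ≠ 0 := Nat.cast_ne_zero.mpr hK.ne'
  have E0 : ∑ η : Fin K → Fin p, (∏ s, q (η s)) = 1 := by
    rw [key_prod (fun _ j => q j)]
    simp [hq1]
  have E1 : ∑ η : Fin K → Fin p, (∏ s, q (η s)) * (∑ s, c (η s))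
      = K * (∑ j, q j * c j) := by
    have h : ∀ η : Fin K → Fin p, (∏ s, q (η s)) * (∑ s, c (η s))
        = ∑ s, (∏ t, q (η t)) * c (η s) := fun η => Finset.mul_sum _ _ _
    rw [Finset.sum_congr rfl fun η _ => h η, Finset.sum_comm]
    rw [Finset.sum_congr rfl fun s _ => single_moment q c hq1 s]
    simp [mul_comm]
  have E2 : ∑ η : Fin K → Fin p, (∏ s, q (η s)) * (∑ s, c (η s))^2
      = K * ((∑ j, q j * (c j * c j)) - (∑ j, q j * c j)^2)
        + (K:ℝ)^2 * (∑ j, q j * c j)^2 := by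
    have h1 : ∀ η : Fin K → Fin p, (∏ s, q (η s)) * (∑ s, c (η s))^2
        = ∑ s, ∑ t, (∏ r, q (η r)) * (c (η s) * c (η t)) := by
      intro η
      rw [sq, Finset.sum_mul_sum, Finset.mul_sum]
      exact Finset.sum_congr rfl fun s _ => Finset.mul_sum _ _ _
    rw [Finset.sum_congr rfl fun η _ => h1 η, Finset.sum_comm]
    have h2 : ∀ s : Fin K, ∑ η : Fin K → Fin p, ∑ t, (∏ r, q (η r)) * (c (η s) * c (η t))
        = ∑ t, ∑ η : Fin K → Fin p, (∏ r, q (η r)) * (c (η s) * c (η t)) :=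
      fun s => Finset.sum_comm
    rw [Finset.sum_congr rfl fun s _ => h2 s]
    have h3 : ∀ s t : Fin K, ∑ η : Fin K → Fin p, (∏ r, q (η r)) * (c (η s) * c (η t))
        = if s = t then (∑ j, q j * (c j * c j)) else (∑ j, q j * c j)^2 := by
      intro s t
      by_cases hst : s = t
      · subst hst
        rw [if_pos rfl]
        exact single_moment q (fun j => c j * c j) hq1 s
      · rw [if_neg hst, sq, pair_moment q c c hq1 hst]
    rw [Finset.sum_congr rfl fun s _ => Finset.sum_congr rfl fun t _ => h3 s t]
    exact sum_sum_ite _ _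
  have hexp : ∀ η : Fin K → Fin p,
      (∏ s, q (η s)) * (a - (∑ s, c (η s)) / K)^2
        = a^2 * (∏ s, q (η s))
          - (2*a/K) * ((∏ s, q (η s)) * (∑ s, c (η s)))
          + (1/(K:ℝ)^2) * ((∏ s, q (η s)) * (∑ s, c (η s))^2) := by
    intro η
    field_simp
    ring
  rw [Finset.sum_congr rfl fun η _ => hexp η, Finset.sum_add_distrib,
      Finset.sum_sub_distrib, ← Finset.mul_sum, ← Finset.mul_sum, ← Finset.mul_sum,
      E0, E1, E2]
  field_simp
  ring

private lemma sign_mul_abs' (x : ℝ) : Real.sign x * |x| = x := by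
  rcases lt_trichotomy x 0 with h | h | h
  · rw [Real.sign_of_neg h, abs_of_neg h]; ring
  · simp [h]
  · rw [Real.sign_of_pos h, abs_of_pos h]; ring

private lemma sign_sq_le (x : ℝ) : Real.sign x * Real.sign x ≤ 1 := by
  rcases Real.sign_apply_eq x with h | h | h <;> rw [h] <;> norm_num

/-- Theorem 2: for any `f ∈ ℝⁿ`, the Maurey randomized estimator `β̂_M` (with at
most `K` non-zero coordinates) satisfies
`E*‖f − Zβ̂_M‖² ≤ ‖f − Zβ̃‖² + ‖β̃‖₁²/K`, where `‖v‖² = n⁻¹∑ v_i²` and the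
diagonal entries of `Z'Z/n` equal 1. -/
theorem stmt_14 {n p K : ℕ} (hK : 0 < K)
    (Z : Matrix (Fin n) (Fin p) ℝ)
    (hdiag : ∀ j, (∑ i, (Z i j)^2) / n = 1)
    (f : Fin n → ℝ) (β : Fin p → ℝ)
    (hl1 : 0 < ∑ j, |β j|)
    (hK2 : 2 ≤ (Finset.univ.filter (fun i => β i ≠ 0)).card) :
    ∑ η : Fin K → Fin p,
        (∏ s, |β (η s)| / ∑ t, |β t|) *
          ((∑ i, (f i - Z.mulVec (fun j => Real.sign (β j) * (∑ t, |β t|) *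
              ((Finset.univ.filter (fun s => η s = j)).card : ℝ) / K) i)^2) / n)
      ≤ (∑ i, (f i - Z.mulVec β i)^2) / n + (∑ t, |β t|)^2 / K := by
  set W := ∑ t, |β t| with hWdef
  have hW : 0 < W := hl1
  have hWne : W ≠ 0 := hW.ne'
  -- p and n positivity
  have hp : 0 < p := by
    rcases Finset.card_pos.mp (lt_of_lt_of_le (by norm_num) hK2) with ⟨j0, _⟩
    exact Fin.pos j0
  have hn : 0 < n := by
    by_contra h
    have hn0 : n = 0 := Nat.eq_zero_of_not_pos h
    have := hdiag ⟨0, hp⟩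
    subst hn0
    simp at this
  have hnne : (n:ℝ) ≠ 0 := Nat.cast_ne_zero.mpr hn.ne'
  have hKne : (K:ℝ) ≠ 0 := Nat.cast_ne_zero.mpr hK.ne'
  set q : Fin p → ℝ := fun j => |β j| / W with hqdef
  have hq1 : ∑ j, q j = 1 := by
    rw [hqdef, ← Finset.sum_div, ← hWdef, div_self hWne]
  have hq0 : ∀ j, 0 ≤ q j := fun j => div_nonneg (abs_nonneg _) hW.le
  set c : Fin n → Fin p → ℝ := fun i j => Real.sign (β j) * W * Z i j with hcdef
  -- rewrite the mulVec term
  have hmv : ∀ (η : Fin K → Fin p) (i : Fin n),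
      Z.mulVec (fun j => Real.sign (β j) * W *
          ((univ.filter (fun s => η s = j)).card : ℝ) / K) i
        = (∑ s, c i (η s)) / K := by
    intro η i
    have h1 : ∀ s : Fin K, c i (η s) = ∑ j, if η s = j then c i j else 0 := by
      intro s
      rw [Finset.sum_ite_eq]
      simp
    simp only [Matrix.mulVec, dotProduct]
    rw [Finset.sum_congr rfl fun s _ => h1 s, Finset.sum_comm, Finset.sum_div]
    refine Finset.sum_congr rfl fun j _ => ?_
    rw [← Finset.sum_filter, Finset.sum_const, nsmul_eq_mul]
    rw [hcdef]
    ring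
  -- rewrite LHS using hmv and pull out /n
  have hstep : ∀ η : Fin K → Fin p,
      (∏ s, q (η s)) *
          ((∑ i, (f i - Z.mulVec (fun j => Real.sign (β j) * W *
              ((univ.filter (fun s => η s = j)).card : ℝ) / K) i)^2) / n)
        = (∑ i, (∏ s, q (η s)) * (f i - (∑ s, c i (η s)) / K)^2) / n := by
    intro η
    rw [Finset.sum_congr rfl fun i _ => by rw [hmv η i], ← Finset.mul_sum,
        mul_div_assoc]
  rw [Finset.sum_congr rfl fun η _ => hstep η, ← Finset.sum_div, Finset.sum_comm]
  -- apply the moment identity per coordinate i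
  have hmu : ∀ i, (∑ j, q j * c i j) = Z.mulVec β i := by
    intro i
    simp only [Matrix.mulVec, dotProduct]
    refine Finset.sum_congr rfl fun j _ => ?_
    rw [hqdef, hcdef]
    have : |β j| / W * (Real.sign (β j) * W * Z i j)
        = (Real.sign (β j) * |β j|) * Z i j * (W / W) := by ring
    rw [this, div_self hWne, sign_mul_abs', mul_one, mul_comm]
  have hident : ∀ i : Fin n,
      ∑ η : Fin K → Fin p, (∏ s, q (η s)) * (f i - (∑ s, c i (η s)) / K)^2
        = (f i - Z.mulVec β i)^2
          + ((∑ j, q j * (c i j * c i j)) - (Z.mulVec β i)^2) / K := by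
    intro i
    rw [moment_ident hK q (c i) hq1 (f i), hmu i]
  rw [Finset.sum_congr rfl fun i _ => hident i]
  -- now bound
  have hm2 : (∑ i, ∑ j, q j * (c i j * c i j)) / n ≤ W^2 := by
    have hswap : (∑ i, ∑ j, q j * (c i j * c i j))
        = ∑ j, q j * (Real.sign (β j) * Real.sign (β j)) * W^2 * ((∑ i, (Z i j)^2)) := by
      rw [Finset.sum_comm]
      refine Finset.sum_congr rfl fun j _ => ?_
      rw [Finset.mul_sum]
      refine Finset.sum_congr rfl fun i _ => ?_
      rw [hcdef, sq]
      ring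
    rw [hswap, Finset.sum_div]
    have hterm : ∀ j, q j * (Real.sign (β j) * Real.sign (β j)) * W^2 * (∑ i, (Z i j)^2) / n
        ≤ q j * W^2 := by
      intro j
      have h1 : q j * (Real.sign (β j) * Real.sign (β j)) * W^2 * (∑ i, (Z i j)^2) / n
          = q j * (Real.sign (β j) * Real.sign (β j)) * W^2 * ((∑ i, (Z i j)^2) / n) := by
        ring
      rw [h1, hdiag j, mul_one]
      have := sign_sq_le (β j)
      nlinarith [hq0 j, sq_nonneg W, mul_nonneg (hq0 j) (sq_nonneg W)]
    calc ∑ j, q j * (Real.sign (β j) * Real.sign (β j)) * W^2 * (∑ i, (Z i j)^2) / n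
        ≤ ∑ j, q j * W^2 := Finset.sum_le_sum fun j _ => hterm j
      _ = W^2 := by rw [← Finset.sum_mul, hq1, one_mul]
  have hsplit : (∑ i, ((f i - Z.mulVec β i)^2
        + ((∑ j, q j * (c i j * c i j)) - (Z.mulVec β i)^2) / K)) / n
      = (∑ i, (f i - Z.mulVec β i)^2) / n
        + ((∑ i, ∑ j, q j * (c i j * c i j)) / n) / K
        - ((∑ i, (Z.mulVec β i)^2) / n) / K := by
    rw [Finset.sum_add_distrib]
    rw [show (∑ i, ((∑ j, q j * (c i j * c i j)) - (Z.mulVec β i)^2) / K)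
        = ((∑ i, ∑ j, q j * (c i j * c i j)) - ∑ i, (Z.mulVec β i)^2) / K by
      rw [← Finset.sum_div, Finset.sum_sub_distrib]]
    field_simp
    ring
  rw [hsplit]
  have hKpos : (0:ℝ) < K := Nat.cast_pos.mpr hK
  have h1 : ((∑ i, ∑ j, q j * (c i j * c i j)) / n) / K ≤ W^2 / K :=
    (div_le_div_iff_of_pos_right hKpos).mpr hm2
  have h2 : 0 ≤ ((∑ i, (Z.mulVec β i)^2) / n) / K := by positivity
  linarith
end
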